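/- arXiv:2210.06214 — 2 statements merged into one kernel-verified Lean document; each statement's English description precedes it below -/
import Mathlib

section
/- Let t, g, v be positive integers and let K, K' be sets of positive integers. If there exists a t-wise balanced design S(t, K, v), and for every k ∈ K there exists a GDD(t, K', gk) of type g^k, then there exists a GDD(t, K', gv) of type g^v. -/
open Finset

/-- A parallel class on point set `Y`: a collection of blocks that partitions `Y`. -/
def IsParallelClass (Y : Finset ℕ) (P : Finset (Finset ℕ)) : Prop :=
  (∀ b ∈ P, b ⊆ Y) ∧ ∀ y ∈ Y, ∃! b, b ∈ P ∧ y ∈ b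

/-- A block collection `B` on point set `Y` is resolvable if it can be partitioned
into parallel classes of `Y`. -/
def Resolvable (Y : Finset ℕ) (B : Finset (Finset ℕ)) : Prop :=
  ∃ (r : ℕ) (P : Fin r → Finset (Finset ℕ)),
    (∀ i, IsParallelClass Y (P i)) ∧ (∀ i, P i ⊆ B) ∧ ∀ b ∈ B, ∃! i, b ∈ P i

/-- The blocks of the derived design at a point `x`:
`{B \ {x} : x ∈ B, B ∈ B}`. -/
def derivedBlocks (B : Finset (Finset ℕ)) (x : ℕ) : Finset (Finset ℕ) :=
  (B.filter fun b => x ∈ b).image fun b => b.erase x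

/-- A Steiner system S(t, k, v) on point set `X` with block collection `B`. -/
def IsSteiner (t k v : ℕ) (X : Finset ℕ) (B : Finset (Finset ℕ)) : Prop :=
  X.card = v ∧ (∀ b ∈ B, b ⊆ X ∧ b.card = k) ∧
  ∀ T ⊆ X, T.card = t → ∃! b, b ∈ B ∧ T ⊆ b

/-- An RDS(t, k, v): a Steiner system S(t, k, v) whose derived design at every
point is resolvable. -/
def IsRDS (t k v : ℕ) (X : Finset ℕ) (B : Finset (Finset ℕ)) : Prop :=
  IsSteiner t k v X B ∧ ∀ x ∈ X, Resolvable (X.erase x) (derivedBlocks B x)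

/-- Existence of an RDS(t, k, v). -/
def ExistsRDS (t k v : ℕ) : Prop := ∃ X B, IsRDS t k v X B

/-- Existence of an RDSQS(v), i.e. an RDS(3, 4, v). -/
def ExistsRDSQS (v : ℕ) : Prop := ExistsRDS 3 4 v

/-- A Kirkman triple system KTS(v): a resolvable Steiner triple system. -/
def IsKTS (v : ℕ) (X : Finset ℕ) (B : Finset (Finset ℕ)) : Prop :=
  IsSteiner 2 3 v X B ∧ Resolvable X B

/-- Existence of a large set of Kirkman triple systems LKTS(v): a partition of
all 3-element subsets of a v-element set into v - 2 classes, each a KTS(v). -/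
def ExistsLKTS (v : ℕ) : Prop :=
  ∃ (X : Finset ℕ) (C : Fin (v - 2) → Finset (Finset ℕ)),
    X.card = v ∧ (∀ i, IsKTS v X (C i)) ∧
    (∀ T : Finset ℕ, (T ⊆ X ∧ T.card = 3) ↔ ∃ i, T ∈ C i) ∧
    ∀ (T : Finset ℕ) (i j : Fin (v - 2)), T ∈ C i → T ∈ C j → i = j

/-- A t-wise balanced design S(t, K, v) with block sizes from the set `K`. -/
def IsTBD (t : ℕ) (K : Set ℕ) (v : ℕ) (X : Finset ℕ) (B : Finset (Finset ℕ)) : Prop :=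
  X.card = v ∧ (∀ b ∈ B, b ⊆ X ∧ b.card ∈ K) ∧
  ∀ T ⊆ X, T.card = t → ∃! b, b ∈ B ∧ T ⊆ b

/-- A group divisible design GDD(t, K, g*n) of type g^n: `Gs` is a partition of
`X` into `n` groups of size `g`; blocks have sizes in `K`, meet every group in
at most one point, and every t-subset of `X` meeting every group in at most one
point lies in exactly one block. -/
def IsGDD (t : ℕ) (K : Set ℕ) (g n : ℕ) (X : Finset ℕ)
    (Gs Bs : Finset (Finset ℕ)) : Prop :=
  X.card = g * n ∧ Gs.card = n ∧
  (∀ G ∈ Gs, G ⊆ X ∧ G.card = g) ∧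
  (∀ x ∈ X, ∃! G, G ∈ Gs ∧ x ∈ G) ∧
  (∀ b ∈ Bs, b ⊆ X ∧ b.card ∈ K) ∧
  (∀ b ∈ Bs, ∀ G ∈ Gs, (b ∩ G).card ≤ 1) ∧
  ∀ T ⊆ X, T.card = t → (∀ G ∈ Gs, (T ∩ G).card ≤ 1) → ∃! b, b ∈ Bs ∧ T ⊆ b

/-- An RDGDD(t, K, g*n) of type g^n: a GDD whose derived design at every point
(on point set `X \ G`, where `G` is the group of the point) is resolvable. -/
def IsRDGDD (t : ℕ) (K : Set ℕ) (g n : ℕ) (X : Finset ℕ)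
    (Gs Bs : Finset (Finset ℕ)) : Prop :=
  IsGDD t K g n X Gs Bs ∧
  ∀ x ∈ X, ∀ G ∈ Gs, x ∈ G → Resolvable (X \ G) (derivedBlocks Bs x)

/-- An RDSQS*(v): an SQS(v) with v ≡ 1 (mod 3) such that, for every point `x`,
the derived blocks at `x` contain a parallel class `P'` (enumerated by `Bk`);
the multiset consisting of each triple of `P'` three times and each remaining
derived triple twice can be partitioned into (v-1) parallel classes
`P k l` (k ranging over Fin ((v-1)/3), l over Fin 3); and for each `k` the three
parallel classes `P k l` share the common triple `Bk k`. -/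
def IsRDSQSstar (v : ℕ) (X : Finset ℕ) (B : Finset (Finset ℕ)) : Prop :=
  IsSteiner 3 4 v X B ∧ v % 3 = 1 ∧
  ∀ x ∈ X, ∃ (P' : Finset (Finset ℕ)) (Bk : Fin ((v - 1) / 3) → Finset ℕ)
    (P : Fin ((v - 1) / 3) → Fin 3 → Finset (Finset ℕ)),
    P' ⊆ derivedBlocks B x ∧
    IsParallelClass (X.erase x) P' ∧
    (∀ k, Bk k ∈ P') ∧
    (∀ b ∈ P', ∃ k, Bk k = b) ∧
    Function.Injective Bk ∧
    (∀ k l, IsParallelClass (X.erase x) (P k l)) ∧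
    ((∑ k, ∑ l, (P k l).val) =
        3 • P'.val + 2 • ((derivedBlocks B x) \ P').val) ∧
    ∀ k l, Bk k ∈ P k l

/-! Replace every point `x` of the S(t, K, v) by the group `{x} × {0, …, g - 1}` (encoded with
`Nat.pair`), and on the groups over each block `b` place a copy of the GDD of type `g^|b|`,
relabelled so that its groups are exactly these. A `t`-set meeting every group at most once
projects to a `t`-subset of the points, which lies in exactly one block `b`; so it is covered
by exactly one block, namely one of the GDD placed over `b`. -/

def blowUp (g x : ℕ) : Finset ℕ := (range g).image (Nat.pair x)

section BlowUp

variable {g : ℕ}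

lemma mem_blowUp {x a : ℕ} : a ∈ blowUp g x ↔ a.unpair.1 = x ∧ a.unpair.2 < g := by
  constructor
  · rintro h
    obtain ⟨j, hj, rfl⟩ := mem_image.1 h
    simpa using hj
  · rintro ⟨rfl, ha⟩
    exact mem_image.2 ⟨_, mem_range.2 ha, Nat.pair_unpair a⟩

lemma mem_biUnion_blowUp {X : Finset ℕ} {a : ℕ} :
    a ∈ X.biUnion (blowUp g) ↔ a.unpair.1 ∈ X ∧ a.unpair.2 < g := by
  simp [mem_blowUp]

lemma card_blowUp (x : ℕ) : (blowUp g x).card = g := by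
  rw [blowUp, card_image_of_injective _ fun _ _ h => (Nat.pair_eq_pair.1 h).2, card_range]

lemma blowUp_injective (hg : 0 < g) : Function.Injective (blowUp g) := by
  intro x y hxy
  have h : Nat.pair x 0 ∈ blowUp g y := hxy ▸ mem_blowUp.2 (by simpa using hg)
  simpa using (mem_blowUp.1 h).1

lemma card_biUnion_blowUp (X : Finset ℕ) : (X.biUnion (blowUp g)).card = g * X.card := by
  rw [card_biUnion, sum_const_nat fun x _ => card_blowUp x, mul_comm]
  intro x _ y _ hxy
  exact disjoint_left.2 fun a hx hy => hxy ((mem_blowUp.1 hx).1.symm.trans (mem_blowUp.1 hy).1)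

lemma inter_blowUp_eq_empty {b c : Finset ℕ} {x : ℕ} (hc : c ⊆ b.biUnion (blowUp g))
    (hx : x ∉ b) : c ∩ blowUp g x = ∅ := by
  refine eq_empty_of_forall_notMem fun a ha => hx ?_
  obtain ⟨hac, hax⟩ := mem_inter.1 ha
  exact (mem_blowUp.1 hax).1 ▸ (mem_biUnion_blowUp.1 (hc hac)).1

lemma image_unpair_fst_subset_iff {X b T : Finset ℕ} (hT : T ⊆ X.biUnion (blowUp g)) :
    T.image (fun a : ℕ => a.unpair.1) ⊆ b ↔ T ⊆ b.biUnion (blowUp g) := by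
  rw [image_subset_iff]
  exact forall₂_congr fun a ha => by
    rw [mem_biUnion_blowUp, and_iff_left (mem_biUnion_blowUp.1 (hT ha)).2]

lemma injOn_unpair_fst {X T : Finset ℕ} (hT : T ⊆ X.biUnion (blowUp g))
    (hTX : ∀ x ∈ X, (T ∩ blowUp g x).card ≤ 1) :
    Set.InjOn (fun a : ℕ => a.unpair.1) T := by
  intro a ha a' ha' h
  have hX := (mem_biUnion_blowUp.1 (hT ha)).1
  have hmem : ∀ c ∈ T, c.unpair.1 = a.unpair.1 → c ∈ T ∩ blowUp g a.unpair.1 :=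
    fun c hc hca => mem_inter.2 ⟨hc, mem_blowUp.2 ⟨hca, (mem_biUnion_blowUp.1 (hT hc)).2⟩⟩
  exact card_le_one.1 (hTX _ hX) a (hmem a ha rfl) a' (hmem a' ha' h.symm)

end BlowUp

lemma Finset.exists_bijOn_of_card_eq {α β : Type*} [Nonempty β] {s : Finset α} {t : Finset β}
    (h : s.card = t.card) : ∃ f : α → β, Set.BijOn f s t :=
  s.finite_toSet.exists_bijOn_of_encard_eq (by simp [h])

lemma Finset.mem_image_iff_of_injOn {α β : Type*} [DecidableEq β] {f : α → β}
    {s t : Finset α} (hf : Set.InjOn f s) (ht : t ⊆ s) {x : α} (hx : x ∈ s) :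
    f x ∈ t.image f ↔ x ∈ t := by
  rw [← mem_coe, coe_image]
  exact hf.mem_image_iff (coe_subset.2 ht) hx

lemma Finset.image_eq_of_bijOn {α β : Type*} [DecidableEq β] {f : α → β} {s : Finset α}
    {t : Finset β} (h : Set.BijOn f s t) : s.image f = t :=
  coe_injective (by rw [coe_image]; exact h.image_eq)

lemma IsGDD.subset_of_mem_blocks {t : ℕ} {K : Set ℕ} {g n : ℕ} {Y : Finset ℕ}
    {Hs Cs : Finset (Finset ℕ)} (h : IsGDD t K g n Y Hs Cs) {c : Finset ℕ} (hc : c ∈ Cs) :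
    c ⊆ Y :=
  (h.2.2.2.2.1 c hc).1

theorem IsGDD.image {t : ℕ} {K : Set ℕ} {g n : ℕ} {Y : Finset ℕ}
    {Hs Cs : Finset (Finset ℕ)} (h : IsGDD t K g n Y Hs Cs) {φ : ℕ → ℕ}
    (hφ : Set.InjOn φ Y) :
    IsGDD t K g n (Y.image φ) (Hs.image (image φ)) (Cs.image (image φ)) := by
  obtain ⟨hcard, hGcard, hGs, hpart, hCs, hmeet, hT⟩ := h
  have hGY : ∀ G ∈ Hs, G ⊆ Y := fun G hG => (hGs G hG).1
  have hCY : ∀ c ∈ Cs, c ⊆ Y := fun c hc => (hCs c hc).1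
  have hcard_image : ∀ s ⊆ Y, (s.image φ).card = s.card := fun s hs =>
    card_image_of_injOn (hφ.mono (coe_subset.2 hs))
  have hcard_inter : ∀ s ⊆ Y, ∀ G ∈ Hs, (s.image φ ∩ G.image φ).card = (s ∩ G).card :=
    fun s hs G hG => by
      have hsG : (↑(s ∪ G) : Set ℕ) ⊆ Y := coe_subset.2 (union_subset hs (hGY G hG))
      rw [← image_inter_of_injOn _ _ (by simpa using hφ.mono hsG),
        hcard_image _ (inter_subset_left.trans hs)]
  refine ⟨by rw [hcard_image Y subset_rfl, hcard], ?_, ?_, ?_, ?_, ?_, ?_⟩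
  · rw [card_image_of_injOn fun G hG G' hG' hGG' =>
      (image_eq_image_iff_of_injOn hφ (hGY G hG) (hGY G' hG')).1 hGG', hGcard]
  · exact forall_mem_image.2 fun G hG =>
      ⟨image_subset_image (hGY G hG), by rw [hcard_image G (hGY G hG), (hGs G hG).2]⟩
  · refine forall_mem_image.2 fun y hy => ?_
    obtain ⟨G, ⟨hG, hyG⟩, hG_unique⟩ := hpart y hy
    refine ⟨G.image φ, ⟨mem_image_of_mem _ hG, mem_image_of_mem _ hyG⟩, ?_⟩
    rintro _ ⟨hG'_mem, hyG'⟩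
    obtain ⟨G', hG', rfl⟩ := mem_image.1 hG'_mem
    rw [hG_unique G' ⟨hG', (mem_image_iff_of_injOn hφ (hGY G' hG') hy).1 hyG'⟩]
  · exact forall_mem_image.2 fun c hc =>
      ⟨image_subset_image (hCY c hc), by rw [hcard_image c (hCY c hc)]; exact (hCs c hc).2⟩
  · exact forall_mem_image.2 fun c hc => forall_mem_image.2 fun G hG => by
      rw [hcard_inter c (hCY c hc) G hG]; exact hmeet c hc G hG
  · intro T' hT' hT'card hT'meet
    obtain ⟨T, hTY, rfl⟩ := subset_image_iff.1 hT'
    rw [hcard_image T hTY] at hT'card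
    obtain ⟨c, ⟨hc, hTc⟩, hc_unique⟩ := hT T hTY hT'card fun G hG => by
      rw [← hcard_inter T hTY G hG]; exact hT'meet _ (mem_image_of_mem _ hG)
    refine ⟨c.image φ, ⟨mem_image_of_mem _ hc, image_subset_image hTc⟩, ?_⟩
    rintro _ ⟨hc'_mem, hTc'⟩
    obtain ⟨c', hc', rfl⟩ := mem_image.1 hc'_mem
    rw [hc_unique c' ⟨hc', (image_subset_image_iff_of_injOn hφ hTY (hCY c' hc')).1 hTc'⟩]

lemma exists_injOn_image_groups_eq_blowUp {g : ℕ} {Y b : Finset ℕ} {Hs : Finset (Finset ℕ)}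
    (hGs : ∀ G ∈ Hs, G ⊆ Y ∧ G.card = g) (hpart : ∀ y ∈ Y, ∃! G, G ∈ Hs ∧ y ∈ G)
    (hcard : Hs.card = b.card) :
    ∃ φ : ℕ → ℕ, Set.InjOn φ Y ∧ Hs.image (image φ) = b.image (blowUp g) := by
  obtain ⟨σ, hσ⟩ := exists_bijOn_of_card_eq hcard
  have hψ : ∀ G ∈ Hs, ∃ ψ : ℕ → ℕ, Set.BijOn ψ G (range g) := fun G hG =>
    exists_bijOn_of_card_eq (by rw [(hGs G hG).2, card_range])
  choose! ψ hψ using hψ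
  choose! γ hγ hγ_unique using hpart
  have hγ_eq : ∀ G ∈ Hs, ∀ y ∈ G, γ y = G := fun G hG y hy =>
    (hγ_unique y ((hGs G hG).1 hy) G ⟨hG, hy⟩).symm
  -- `φ` sends the group `G` onto `blowUp g (σ G)`, numbering its points by `ψ G`.
  set φ : ℕ → ℕ := fun y => Nat.pair (σ (γ y)) (ψ (γ y) y)
  have hφ_image : ∀ G ∈ Hs, G.image φ = blowUp g (σ G) := fun G hG =>
    calc G.image φ = (G.image (ψ G)).image (Nat.pair (σ G)) := by
          rw [image_image]
          exact image_congr fun y hy => by simp only [φ, Function.comp, hγ_eq G hG y hy]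
      _ = blowUp g (σ G) := by rw [image_eq_of_bijOn (hψ G hG), blowUp]
  refine ⟨φ, fun y hy y' hy' h => ?_, ?_⟩
  · obtain ⟨hσ_eq, hψ_eq⟩ := Nat.pair_eq_pair.1 h
    have hγ_eq' : γ y = γ y' := hσ.injOn (hγ y hy).1 (hγ y' hy').1 hσ_eq
    rw [hγ_eq'] at hψ_eq
    exact (hψ _ (hγ y' hy').1).injOn (hγ_eq' ▸ (hγ y hy).2) (hγ y' hy').2 hψ_eq
  · calc Hs.image (image φ) = (Hs.image σ).image (blowUp g) := by
          rw [image_image]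
          exact image_congr hφ_image
      _ = b.image (blowUp g) := by rw [image_eq_of_bijOn hσ]

theorem IsGDD.exists_relabel {t : ℕ} {K : Set ℕ} {g k : ℕ} {Y : Finset ℕ}
    {Hs Cs : Finset (Finset ℕ)} (h : IsGDD t K g k Y Hs Cs) {b : Finset ℕ} (hb : b.card = k) :
    ∃ Cs', IsGDD t K g k (b.biUnion (blowUp g)) (b.image (blowUp g)) Cs' := by
  have ⟨_, hGcard, hGs, hpart, _⟩ := h
  obtain ⟨φ, hφ, hφ_groups⟩ :=
    exists_injOn_image_groups_eq_blowUp hGs hpart (hGcard.trans hb.symm)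
  have hY : Hs.biUnion id = Y := by
    ext y
    refine ⟨fun hy => ?_, fun hy => ?_⟩
    · obtain ⟨G, hG, hyG⟩ := mem_biUnion.1 hy
      exact (hGs G hG).1 hyG
    · obtain ⟨G, ⟨hG, hyG⟩, -⟩ := hpart y hy
      exact mem_biUnion.2 ⟨G, hG, hyG⟩
  have hY_image : Y.image φ = b.biUnion (blowUp g) :=
    calc Y.image φ = (Hs.image (Finset.image φ)).biUnion id := by
          rw [← hY, biUnion_image, image_biUnion]; rfl
      _ = b.biUnion (blowUp g) := by rw [hφ_groups, image_biUnion]; rfl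
  refine ⟨Cs.image (Finset.image φ), ?_⟩
  rw [← hY_image, ← hφ_groups]
  exact h.image hφ

section FillIn

variable {t g v : ℕ} {K K' : Set ℕ} {X : Finset ℕ} {B : Finset (Finset ℕ)}
  {C : Finset ℕ → Finset (Finset ℕ)}

lemma existsUnique_mem_fillIn_of_card_eq (hB : IsTBD t K v X B)
    (hC : ∀ b ∈ B, IsGDD t K' g b.card (b.biUnion (blowUp g)) (b.image (blowUp g)) (C b))
    {T : Finset ℕ} (hT : T ⊆ X.biUnion (blowUp g)) (hTcard : T.card = t)
    (hTX : ∀ x ∈ X, (T ∩ blowUp g x).card ≤ 1) : ∃! c, c ∈ B.biUnion C ∧ T ⊆ c := by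
  obtain ⟨-, hBX, hBT⟩ := hB
  set S := T.image fun a : ℕ => a.unpair.1
  have hSX : S ⊆ X := (image_unpair_fst_subset_iff hT).2 hT
  have hScard : S.card = t := by rw [card_image_of_injOn (injOn_unpair_fst hT hTX), hTcard]
  obtain ⟨b, ⟨hb, hSb⟩, hb_unique⟩ := hBT S hSX hScard
  have hTb : T ⊆ b.biUnion (blowUp g) := (image_unpair_fst_subset_iff hT).1 hSb
  have hTb' : ∀ G ∈ b.image (blowUp g), (T ∩ G).card ≤ 1 :=
    forall_mem_image.2 fun x hx => hTX x ((hBX b hb).1 hx)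
  obtain ⟨c, ⟨hc, hTc⟩, hc_unique⟩ := (hC b hb).2.2.2.2.2.2 T hTb hTcard hTb'
  refine ⟨c, ⟨mem_biUnion.2 ⟨b, hb, hc⟩, hTc⟩, ?_⟩
  rintro c' ⟨hc', hTc'⟩
  obtain ⟨b', hb', hc'b'⟩ := mem_biUnion.1 hc'
  have hSb' : S ⊆ b' := (image_unpair_fst_subset_iff hT).2
    (hTc'.trans ((hC b' hb').subset_of_mem_blocks hc'b'))
  obtain rfl := hb_unique b' ⟨hb', hSb'⟩
  exact hc_unique c' ⟨hc'b', hTc'⟩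

theorem isGDD_fillIn (hg : 0 < g) (hB : IsTBD t K v X B)
    (hC : ∀ b ∈ B, IsGDD t K' g b.card (b.biUnion (blowUp g)) (b.image (blowUp g)) (C b)) :
    IsGDD t K' g v (X.biUnion (blowUp g)) (X.image (blowUp g)) (B.biUnion C) := by
  refine ⟨by rw [card_biUnion_blowUp, hB.1],
    by rw [card_image_of_injective _ (blowUp_injective hg), hB.1],
    forall_mem_image.2 fun x hx => ⟨subset_biUnion_of_mem _ hx, card_blowUp x⟩, ?_, ?_, ?_,
    fun T hT hTcard hTX =>
      existsUnique_mem_fillIn_of_card_eq hB hC hT hTcard (forall_mem_image.1 hTX)⟩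
  · intro a ha
    obtain ⟨x, hx, hax⟩ := mem_biUnion.1 ha
    refine ⟨blowUp g x, ⟨mem_image_of_mem _ hx, hax⟩, ?_⟩
    rintro G ⟨hG, haG⟩
    obtain ⟨y, -, rfl⟩ := mem_image.1 hG
    rw [← (mem_blowUp.1 haG).1, (mem_blowUp.1 hax).1]
  · intro c hc
    obtain ⟨b, hb, hcb⟩ := mem_biUnion.1 hc
    exact ⟨((hC b hb).subset_of_mem_blocks hcb).trans
      (biUnion_subset_biUnion_of_subset_left _ (hB.2.1 b hb).1), ((hC b hb).2.2.2.2.1 c hcb).2⟩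
  · intro c hc
    obtain ⟨b, hb, hcb⟩ := mem_biUnion.1 hc
    refine forall_mem_image.2 fun x _ => ?_
    by_cases hxb : x ∈ b
    · exact (hC b hb).2.2.2.2.2.1 c hcb _ (mem_image_of_mem _ hxb)
    · rw [inter_blowUp_eq_empty ((hC b hb).subset_of_mem_blocks hcb) hxb, card_empty]
      exact zero_le_one

end FillIn

theorem stmt_1_general (t g v : ℕ) (K K' : Set ℕ) (hg : 0 < g)
    (hS : ∃ X B, IsTBD t K v X B)
    (hGDD : ∀ k ∈ K, ∃ X Gs Bs, IsGDD t K' g k X Gs Bs) :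
    ∃ X Gs Bs, IsGDD t K' g v X Gs Bs := by
  obtain ⟨X, B, hB⟩ := hS
  have hC : ∀ b ∈ B,
      ∃ Cs, IsGDD t K' g b.card (b.biUnion (blowUp g)) (b.image (blowUp g)) Cs := fun b hb => by
    obtain ⟨Y, Hs, Cs, h⟩ := hGDD b.card (hB.2.1 b hb).2
    exact h.exists_relabel rfl
  choose! C hC using hC
  exact ⟨_, _, _, isGDD_fillIn hg hB hC⟩

/-- If there is an S(t, K, v), and for every k ∈ K there is a GDD(t, K', gk) of
type g^k, then there is a GDD(t, K', gv) of type g^v. -/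
theorem stmt_1 (t g v : ℕ) (K K' : Set ℕ) (ht : 0 < t) (hg : 0 < g) (hv : 0 < v)
    (hK : ∀ k ∈ K, 0 < k) (hK' : ∀ k ∈ K', 0 < k)
    (hS : ∃ X B, IsTBD t K v X B)
    (hGDD : ∀ k ∈ K, ∃ X Gs Bs, IsGDD t K' g k X Gs Bs) :
    ∃ X Gs Bs, IsGDD t K' g v X Gs Bs :=
  stmt_1_general t g v K K' hg hS hGDD
end

section
/- There exists an RDTD(3, 4, 4), i.e., a transversal design TD(3, 4, 4) (a GDD(3, 4, 16) of type 4^4) whose derived design at every point is resolvable. -/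
/-!
Take the points to be `Fin 4 × 𝔽₄` and the blocks to be the transversals `{(i, aᵢ)}` with
`a₀ + a₁ + a₂ + a₃ = 0`: any three coordinates of such a transversal determine the fourth, which
gives the TD(3, 4, 4). The derived design at `(i, a)` consists of the triples on the other three
groups whose coordinates sum to `a`. With `ω` a generator of `𝔽₄ˣ`, so that `1 + ω = ω²`, these
triples split into the four parallel classes `{(j, y), (k, ω y + c), (l, ω² y + c + a)}`
(`y ∈ 𝔽₄`), indexed by `c ∈ 𝔽₄`.
-/

open Finset

theorem existsUnique_mem_and_iff_card_filter {α : Type*} {s : Finset α} {p : α → Prop}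
    [DecidablePred p] : (∃! a, a ∈ s ∧ p a) ↔ #(s.filter p) = 1 := by
  simp only [card_eq_one_iff_existsUnique, mem_filter]

theorem isParallelClass_iff_card_filter {Y : Finset ℕ} {P : Finset (Finset ℕ)} :
    IsParallelClass Y P ↔ (∀ b ∈ P, b ⊆ Y) ∧ ∀ y ∈ Y, #(P.filter (y ∈ ·)) = 1 := by
  simp only [IsParallelClass, existsUnique_mem_and_iff_card_filter]

instance (Y : Finset ℕ) (P : Finset (Finset ℕ)) : Decidable (IsParallelClass Y P) :=
  decidable_of_iff _ isParallelClass_iff_card_filter.symm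

theorem resolvable_of_card_filter {Y : Finset ℕ} {B : Finset (Finset ℕ)} {r : ℕ}
    (P : Fin r → Finset (Finset ℕ)) (hP : ∀ i, IsParallelClass Y (P i)) (hPB : ∀ i, P i ⊆ B)
    (hB : ∀ b ∈ B, #(univ.filter (b ∈ P ·)) = 1) : Resolvable Y B :=
  ⟨r, P, hP, hPB, fun b hb => by simpa using existsUnique_mem_and_iff_card_filter.2 (hB b hb)⟩

theorem isGDD_iff_card_filter {t : ℕ} {K : Set ℕ} {g n : ℕ} {X : Finset ℕ}
    {Gs Bs : Finset (Finset ℕ)} :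
    IsGDD t K g n X Gs Bs ↔
      #X = g * n ∧ #Gs = n ∧ (∀ G ∈ Gs, G ⊆ X ∧ #G = g) ∧ (∀ x ∈ X, #(Gs.filter (x ∈ ·)) = 1) ∧
      (∀ b ∈ Bs, b ⊆ X ∧ #b ∈ K) ∧ (∀ b ∈ Bs, ∀ G ∈ Gs, #(b ∩ G) ≤ 1) ∧
      ∀ T ∈ X.powersetCard t, (∀ G ∈ Gs, #(T ∩ G) ≤ 1) → #(Bs.filter (T ⊆ ·)) = 1 := by
  simp only [IsGDD, existsUnique_mem_and_iff_card_filter, mem_powersetCard, and_imp]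

instance {t : ℕ} {K : Set ℕ} [DecidablePred (· ∈ K)] {g n : ℕ} {X : Finset ℕ}
    {Gs Bs : Finset (Finset ℕ)} : Decidable (IsGDD t K g n X Gs Bs) :=
  decidable_of_iff _ isGDD_iff_card_filter.symm

/-- The point `a` of the group `i`, where `𝔽₄` is `{0, 1, 2, 3}` with addition `^^^`. -/
def tdPoint (i a : ℕ) : ℕ := 4 * i + a

def tdGroup (i : ℕ) : Finset ℕ := (range 4).image (tdPoint i)

def tdGroups : Finset (Finset ℕ) := (range 4).image tdGroup

def tdBlock (a b c : ℕ) : Finset ℕ :=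
  {tdPoint 0 a, tdPoint 1 b, tdPoint 2 c, tdPoint 3 (a ^^^ b ^^^ c)}

def tdBlocks : Finset (Finset ℕ) :=
  (range 4 ×ˢ range 4 ×ˢ range 4).image fun t => tdBlock t.1 t.2.1 t.2.2

/-- Multiplication by a generator `ω` of `𝔽₄ˣ`. -/
def mulOmega : ℕ → ℕ
  | 0 => 0 | 1 => 2 | 2 => 3 | _ => 1

/-- The parallel class `c` of the derived design at `p`, on the groups following that of `p`
cyclically; `y ^^^ mulOmega y` is `ω² y`. -/
def derivedClass (p c : ℕ) : Finset (Finset ℕ) :=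
  (range 4).image fun y =>
    {tdPoint ((p / 4 + 1) % 4) y, tdPoint ((p / 4 + 2) % 4) (mulOmega y ^^^ c),
      tdPoint ((p / 4 + 3) % 4) (y ^^^ mulOmega y ^^^ c ^^^ p % 4)}

theorem isGDD_td : IsGDD 3 {4} 4 4 (range 16) tdGroups tdBlocks := by
  decide +kernel

theorem eq_tdGroup_of_mem {G : Finset ℕ} (hG : G ∈ tdGroups) {p : ℕ} (hp : p ∈ G) :
    G = tdGroup (p / 4) := by
  obtain ⟨i, -, rfl⟩ := mem_image.1 hG
  obtain ⟨a, ha, rfl⟩ := mem_image.1 hp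
  rw [tdPoint, show (4 * i + a) / 4 = i by grind]

theorem derivedClass_resolves : ∀ p ∈ range 16,
    (∀ c : Fin 4, IsParallelClass (range 16 \ tdGroup (p / 4)) (derivedClass p c)) ∧
    (∀ c : Fin 4, derivedClass p c ⊆ derivedBlocks tdBlocks p) ∧
    ∀ b ∈ derivedBlocks tdBlocks p, #(univ.filter fun c : Fin 4 => b ∈ derivedClass p c) = 1 := by
  decide +kernel

/-- There exists an RDTD(3, 4, 4), i.e. a GDD(3, 4, 16) of type 4^4 whose
derived design at every point is resolvable. -/
theorem stmt_12 : ∃ X Gs Bs, IsRDGDD 3 {4} 4 4 X Gs Bs := by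
  refine ⟨range 16, tdGroups, tdBlocks, isGDD_td, fun p hp G hG hpG => ?_⟩
  obtain ⟨hclass, hsub, hcover⟩ := derivedClass_resolves p hp
  rw [eq_tdGroup_of_mem hG hpG]
  exact resolvable_of_card_filter _ hclass hsub hcover
end
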